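/- Let |q| < 1, |ρ| < 1, x, y ∈ S(q), and let i, j ≥ 0 be integers. Then γ_{i,j}(x,y|ρ,q) = Q_{i,j}(x,y|ρ,q) · γ_{0,0}(x,y|ρ,q). -/

import Mathlib

/-!
Both `γ_{i,j}` and `Q_{i,j} γ_{0,0}` satisfy the recurrence
`F_{i,j+1} = y F_{i,j} - [j]_q F_{i,j-1} - ρ q^j F_{i+1,j}`, which determines a family from its
values at `j = 0`. For `γ` it follows termwise from the recurrence of `H_{n+j}(y)` and
`[n+j]_q = [j]_q + q^j [n]_q`; shifting `n` turns the `q^j [n]_q` part into `ρ q^j γ_{i+1,j}`.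
For `Q` it is the q-Pascal rule applied to the coefficients of `P_{i+s}/(ρ²;q)_{i+s}`. At `j = 0` the two agree:
eliminating `γ_{i,1}` between the recurrence and its mirror image in `x` shows that `γ_{i,0}`
satisfies the recurrence of `P_i(x|y,ρ,q)/(ρ²;q)_i`.

The series converge absolutely: for `x = 2 cos θ / √(1-q)` one has
`H_n(x|q) = (1-q)^(-n/2) ∑_k [n choose k]_q cos((n-2k)θ)`, while the q-binomials are bounded and
`(1-q)^n [n]_q! = (q;q)_n` stays between two positive constants.
-/

open Finset MeasureTheory

noncomputable section

/-- [n]_q = 1 + q + ... + q^{n-1} -/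
def qNat (q : ℝ) (n : ℕ) : ℝ := ∑ j ∈ Finset.range n, q ^ j

/-- [n]_q! -/
def qFact (q : ℝ) : ℕ → ℝ
  | 0 => 1
  | n + 1 => qFact q n * qNat q (n + 1)

/-- q-binomial coefficient -/
def qBinom (q : ℝ) (n k : ℕ) : ℝ :=
  if k ≤ n then qFact q n / (qFact q (n - k) * qFact q k) else 0

/-- q-Pochhammer symbol (a;q)_n -/
def qPoch (a q : ℝ) (n : ℕ) : ℝ := ∏ j ∈ Finset.range n, (1 - a * q ^ j)

/-- q-Pochhammer symbol (a;q)_∞ -/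
def qPochInf (a q : ℝ) : ℝ := ∏' j : ℕ, (1 - a * q ^ j)

/-- continuous q-Hermite polynomials H_n(x|q) -/
def qHermite (q : ℝ) : ℕ → ℝ → ℝ
  | 0, _ => 1
  | 1, x => x
  | n + 2, x => x * qHermite q (n + 1) x - qNat q (n + 1) * qHermite q n x

/-- big q-Hermite polynomials H_n(x|a,q) -/
def bigqHermite (q a : ℝ) : ℕ → ℝ → ℝ
  | 0, _ => 1
  | 1, x => x - a
  | n + 2, x => (x - a * q ^ (n + 1)) * bigqHermite q a (n + 1) x -
      qNat q (n + 1) * bigqHermite q a n x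

/-- rescaled Al-Salam--Chihara polynomials P_n(x|y,ρ,q) -/
def ascP (q y ρ : ℝ) : ℕ → ℝ → ℝ
  | 0, _ => 1
  | 1, x => x - ρ * y
  | n + 2, x => (x - ρ * y * q ^ (n + 1)) * ascP q y ρ (n + 1) x -
      qNat q (n + 1) * (1 - ρ ^ 2 * q ^ n) * ascP q y ρ n x

/-- generating function φ_H(x|t,q) of the q-Hermite polynomials -/
def phiH (q t x : ℝ) : ℝ := ∑' n : ℕ, t ^ n / qFact q n * qHermite q n x

/-- γ_{i,j}(x,y|ρ,q) -/
def gammaPM (q ρ : ℝ) (i j : ℕ) (x y : ℝ) : ℝ :=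
  ∑' n : ℕ, ρ ^ n / qFact q n * qHermite q (n + i) x * qHermite q (n + j) y

/-- the polynomials Q_{i,j}(x,y|ρ,q) -/
def Qpoly (q ρ : ℝ) (i j : ℕ) (x y : ℝ) : ℝ :=
  ∑ s ∈ Finset.range (j + 1),
    (-1 : ℝ) ^ s * q ^ (s * (s - 1) / 2) * qBinom q j s * ρ ^ s * qHermite q (j - s) y *
      ascP q y ρ (i + s) x / qPoch (ρ ^ 2) q (i + s)

/-- the interval S(q) = [-2/√(1-q), 2/√(1-q)] -/
def Sq (q : ℝ) : Set ℝ := Set.Icc (-(2 / Real.sqrt (1 - q))) (2 / Real.sqrt (1 - q))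

/-- ω(x,y|ρ) -/
def omegaPM (x y ρ : ℝ) : ℝ :=
  (1 - ρ ^ 2) ^ 2 - 4 * ρ * (1 + ρ ^ 2) * x * y + 4 * ρ ^ 2 * (x ^ 2 + y ^ 2)

/-- l(x|a) -/
def lPM (x a : ℝ) : ℝ := (1 + a) ^ 2 - 4 * a * x ^ 2

/-- the q-Normal density f_N(x|q) -/
def fN (q x : ℝ) : ℝ :=
  Real.sqrt ((1 - q) * (4 - (1 - q) * x ^ 2)) * qPochInf q q / (2 * Real.pi) *
    ∏' j : ℕ, lPM (x * Real.sqrt (1 - q) / 2) (q ^ (j + 1))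

/-- the (q,ρ)-Conditional Normal density f_CN(x|y,ρ,q) -/
def fCN (q ρ x y : ℝ) : ℝ :=
  fN q x * qPochInf (ρ ^ 2) q /
    ∏' j : ℕ, omegaPM (x * Real.sqrt (1 - q) / 2) (y * Real.sqrt (1 - q) / 2) (ρ * q ^ j)

/-- the (ρ,q)-bivariate Normal density f_{2D}(x,y|ρ,q) -/
def f2D (q ρ x y : ℝ) : ℝ := fCN q ρ x y * fN q y

section QBinomial

variable {q : ℝ}

lemma qNat_zero : qNat q 0 = 0 := rfl

lemma one_sub_mul_qNat (n : ℕ) : (1 - q) * qNat q n = 1 - q ^ n := mul_neg_geom_sum q n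

lemma qNat_add (a b : ℕ) : qNat q (a + b) = qNat q a + q ^ a * qNat q b := by
  simp only [qNat, sum_range_add, mul_sum, pow_add]

lemma qNat_pos (hq : -1 < q) {n : ℕ} (hn : n ≠ 0) : 0 < qNat q n :=
  geom_sum_pos' (by linarith) hn

lemma qFact_succ (n : ℕ) : qFact q (n + 1) = qFact q n * qNat q (n + 1) := rfl

lemma qFact_pos (hq : -1 < q) (n : ℕ) : 0 < qFact q n := by
  induction n with
  | zero => exact one_pos
  | succ n ih => exact mul_pos ih (qNat_pos hq n.succ_ne_zero)

lemma one_sub_pow_mul_qFact (n : ℕ) : (1 - q) ^ n * qFact q n = qPoch q q n := by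
  induction n with
  | zero => simp [qFact, qPoch]
  | succ n ih =>
    rw [qPoch, prod_range_succ, ← qPoch, ← ih, qFact, pow_succ, ← pow_succ' q n,
      ← one_sub_mul_qNat]
    ring

lemma qBinom_of_le {n k : ℕ} (h : k ≤ n) :
    qBinom q n k = qFact q n / (qFact q (n - k) * qFact q k) := if_pos h

lemma qBinom_of_lt {n k : ℕ} (h : n < k) : qBinom q n k = 0 := if_neg (by omega)

lemma qBinom_zero_right (hq : -1 < q) (n : ℕ) : qBinom q n 0 = 1 := by
  simp [qBinom_of_le, qFact, (qFact_pos hq n).ne']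

lemma qBinom_self (hq : -1 < q) (n : ℕ) : qBinom q n n = 1 := by
  simp [qBinom_of_le, qFact, (qFact_pos hq n).ne']

lemma qBinom_eq_qPoch_div (hq : q ≠ 1) {n k : ℕ} (h : k ≤ n) :
    qBinom q n k = qPoch q q n / (qPoch q q (n - k) * qPoch q q k) := by
  have h1q : 1 - q ≠ 0 := sub_ne_zero.2 hq.symm
  rw [qBinom_of_le h, ← one_sub_pow_mul_qFact, ← one_sub_pow_mul_qFact,
    ← one_sub_pow_mul_qFact, mul_mul_mul_comm, ← pow_add, Nat.sub_add_cancel h,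
    mul_div_mul_left _ _ (pow_ne_zero _ h1q)]

lemma qBinom_succ_succ (hq : -1 < q) (n k : ℕ) :
    qBinom q (n + 1) (k + 1) = qBinom q n (k + 1) + q ^ (n - k) * qBinom q n k := by
  rcases lt_trichotomy k n with hk | rfl | hk
  · obtain ⟨m, rfl⟩ := Nat.exists_eq_add_of_lt hk
    rw [qBinom_of_le (by omega), qBinom_of_le (by omega), qBinom_of_le (by omega),
      show k + m + 1 + 1 - (k + 1) = m + 1 by omega, show k + m + 1 - (k + 1) = m by omega,
      show k + m + 1 - k = m + 1 by omega, qFact_succ (k + m + 1), qFact_succ m, qFact_succ k]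
    have hadd : qNat q (k + m + 1 + 1) = qNat q (m + 1) + q ^ (m + 1) * qNat q (k + 1) := by
      rw [show k + m + 1 + 1 = (m + 1) + (k + 1) by omega, qNat_add]
    have := (qFact_pos hq m).ne'
    have := (qFact_pos hq k).ne'
    have := (qNat_pos hq m.succ_ne_zero).ne'
    have := (qNat_pos hq k.succ_ne_zero).ne'
    field_simp
    rw [hadd]
    ring
  · simp [qBinom_self hq, qBinom_of_lt]
  · simp [qBinom_of_lt, hk, Nat.lt_succ_of_lt hk]

lemma qBinom_succ_mul_qNat (hq : -1 < q) (n k : ℕ) :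
    qBinom q (n + 1) k * qNat q (n + 1 - k) = qNat q (n + 1) * qBinom q n k := by
  rcases le_or_gt k n with hk | hk
  · rw [qBinom_of_le (by omega), qBinom_of_le hk, show n + 1 - k = n - k + 1 by omega,
      qFact_succ n, qFact_succ (n - k)]
    have := (qFact_pos hq (n - k)).ne'
    have := (qFact_pos hq k).ne'
    have := (qNat_pos hq (n - k).succ_ne_zero).ne'
    field_simp
  · rw [qBinom_of_lt hk]
    rcases Nat.lt_or_ge (n + 1) k with hk | hk'
    · rw [qBinom_of_lt hk, zero_mul, mul_zero]
    · rw [show n + 1 - k = 0 by omega, qNat_zero, mul_zero, mul_zero]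

lemma one_sub_pow_mul_qBinom_succ (hq : -1 < q) (n k : ℕ) :
    (1 - q ^ (n + 1 - k)) * qBinom q (n + 1) k = (1 - q ^ (n + 1)) * qBinom q n k := by
  rw [← one_sub_mul_qNat, ← one_sub_mul_qNat, mul_assoc, mul_assoc, mul_comm (qNat q _),
    qBinom_succ_mul_qNat hq]

lemma qBinom_add_two_succ (hq : -1 < q) (n k : ℕ) :
    qBinom q (n + 2) (k + 1) =
      qBinom q (n + 1) (k + 1) + qBinom q (n + 1) k - (1 - q ^ (n + 1)) * qBinom q n k := by
  rw [qBinom_succ_succ hq, ← one_sub_pow_mul_qBinom_succ hq]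
  ring

end QBinomial

section QPochhammerBounds

open Real

variable {q : ℝ}

lemma geom_sum_abs_le (hq : |q| < 1) (n : ℕ) : ∑ j ∈ range n, |q| ^ j ≤ (1 - |q|)⁻¹ := by
  have := geom_sum_Ico_le_of_lt_one (m := 0) (n := n) (abs_nonneg q) hq
  rwa [← range_eq_Ico, pow_zero, one_div] at this

lemma exp_neg_div_le_one_sub {t b : ℝ} (ht : |t| ≤ b) (hb : b < 1) :
    exp (-(|t| / (1 - b))) ≤ 1 - t := by
  have h1t : 0 < 1 - t := by linarith [le_abs_self t]
  have hlog : -(|t| / (1 - b)) ≤ 1 - (1 - t)⁻¹ := calc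
    -(|t| / (1 - b)) ≤ -(|t| / (1 - t)) := by
      gcongr
      linarith [le_abs_self t]
    _ ≤ -(t / (1 - t)) := by gcongr; exact le_abs_self t
    _ = 1 - (1 - t)⁻¹ := by field_simp; ring
  calc exp (-(|t| / (1 - b))) ≤ exp (log (1 - t)) :=
        exp_le_exp.2 (hlog.trans (one_sub_inv_le_log_of_pos h1t))
    _ = 1 - t := exp_log h1t

lemma abs_qPoch_le (a : ℝ) (hq : |q| < 1) (n : ℕ) :
    |qPoch a q n| ≤ exp (|a| / (1 - |q|)) := by
  have hfactor (j : ℕ) : |1 - a * q ^ j| ≤ exp (|a| * |q| ^ j) := calc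
    |1 - a * q ^ j| ≤ |a| * |q| ^ j + 1 := by
      simpa [abs_mul, abs_pow, add_comm] using abs_sub (1 : ℝ) (a * q ^ j)
    _ ≤ exp (|a| * |q| ^ j) := add_one_le_exp _
  calc |qPoch a q n| ≤ ∏ j ∈ range n, exp (|a| * |q| ^ j) := by
        rw [qPoch, abs_prod]
        exact prod_le_prod (fun _ _ => abs_nonneg _) fun j _ => hfactor j
    _ = exp (|a| * ∑ j ∈ range n, |q| ^ j) := by rw [mul_sum, exp_sum]
    _ ≤ exp (|a| / (1 - |q|)) := by
        rw [div_eq_mul_inv]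
        gcongr
        exact geom_sum_abs_le hq n

lemma exp_neg_le_qPoch {a : ℝ} (ha : |a| < 1) (hq : |q| < 1) (n : ℕ) :
    exp (-(|a| / ((1 - |a|) * (1 - |q|)))) ≤ qPoch a q n := by
  have hfactor (j : ℕ) : exp (-(|a| * |q| ^ j / (1 - |a|))) ≤ 1 - a * q ^ j := by
    have hle : |a * q ^ j| ≤ |a| := by
      rw [abs_mul, abs_pow]
      exact mul_le_of_le_one_right (abs_nonneg a) (pow_le_one₀ (abs_nonneg q) hq.le)
    simpa [abs_mul, abs_pow] using exp_neg_div_le_one_sub hle ha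
  calc exp (-(|a| / ((1 - |a|) * (1 - |q|))))
      ≤ exp (-(|a| / (1 - |a|) * ∑ j ∈ range n, |q| ^ j)) := by
        rw [div_mul_eq_div_div, div_eq_mul_inv _ (1 - |q|)]
        gcongr
        exact geom_sum_abs_le hq n
    _ = ∏ j ∈ range n, exp (-(|a| * |q| ^ j / (1 - |a|))) := by
        rw [← exp_sum, mul_sum, ← sum_neg_distrib]
        congr 2 with j
        ring
    _ ≤ qPoch a q n := prod_le_prod (fun _ _ => (exp_pos _).le) fun j _ => hfactor j

lemma exists_abs_qBinom_le (hq : |q| < 1) : ∃ B, ∀ n k, |qBinom q n k| ≤ B := by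
  set L := exp (-(|q| / ((1 - |q|) * (1 - |q|))))
  have hL : 0 < L := exp_pos _
  refine ⟨exp (|q| / (1 - |q|)) / (L * L), fun n k => ?_⟩
  rcases le_or_gt k n with hk | hk
  · have hP := exp_neg_le_qPoch hq hq
    rw [qBinom_eq_qPoch_div (by rintro rfl; simp at hq) hk, abs_div,
      abs_of_pos (mul_pos (hL.trans_le (hP _)) (hL.trans_le (hP _)))]
    exact div_le_div₀ (exp_pos _).le (abs_qPoch_le q hq n) (by positivity)
      (mul_le_mul (hP _) (hP _) hL.le (hL.trans_le (hP _)).le)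
  · rw [qBinom_of_lt hk, abs_zero]
    positivity

end QPochhammerBounds

section CosineRepresentation

open Real

variable {q : ℝ}

lemma sum_range_qBinom_mul (f : ℕ → ℝ) {n N : ℕ} (h : n + 1 ≤ N) :
    ∑ k ∈ range N, qBinom q n k * f k = ∑ k ∈ range (n + 1), qBinom q n k * f k :=
  eventually_constant_sum (fun k hk => by rw [qBinom_of_lt (by omega), zero_mul]) h

def hermiteCosSum (q θ : ℝ) (n : ℕ) : ℝ :=
  ∑ k ∈ range (n + 1), qBinom q n k * cos (((n : ℝ) - 2 * k) * θ)

lemma hermiteCosSum_add_two (hq : -1 < q) (θ : ℝ) (n : ℕ) :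
    hermiteCosSum q θ (n + 2) =
      2 * cos θ * hermiteCosSum q θ (n + 1) - (1 - q ^ (n + 1)) * hermiteCosSum q θ n := by
  set F : ℕ → ℝ := fun k => cos (((n : ℝ) + 2 - 2 * k) * θ)
  have hC2 : hermiteCosSum q θ (n + 2) = ∑ k ∈ range (n + 3), qBinom q (n + 2) k * F k := by
    simp only [hermiteCosSum, F]
    push_cast
    rfl
  have hC1 : 2 * cos θ * hermiteCosSum q θ (n + 1) =
      ∑ k ∈ range (n + 3), qBinom q (n + 1) k * F k +
        ∑ k ∈ range (n + 2), qBinom q (n + 1) k * F (k + 1) := by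
    rw [sum_range_qBinom_mul F (by omega), hermiteCosSum, mul_sum,
      ← sum_add_distrib]
    refine sum_congr rfl fun k _ => ?_
    have hF : F k = cos (((n + 1 : ℕ) - 2 * k : ℝ) * θ + θ) := by
      simp only [F]; push_cast; ring_nf
    have hF' : F (k + 1) = cos (((n + 1 : ℕ) - 2 * k : ℝ) * θ - θ) := by
      simp only [F]; push_cast; ring_nf
    rw [hF, hF', cos_add, cos_sub]
    ring
  have hC0 : hermiteCosSum q θ n = ∑ k ∈ range (n + 2), qBinom q n k * F (k + 1) := by
    rw [sum_range_qBinom_mul (fun k => F (k + 1)) (by omega), hermiteCosSum]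
    refine sum_congr rfl fun k _ => ?_
    simp only [F]
    push_cast
    ring_nf
  have hPascal (k : ℕ) : qBinom q (n + 2) (k + 1) * F (k + 1) =
      qBinom q (n + 1) (k + 1) * F (k + 1) + qBinom q (n + 1) k * F (k + 1) -
        (1 - q ^ (n + 1)) * (qBinom q n k * F (k + 1)) := by
    rw [qBinom_add_two_succ hq]
    ring
  rw [hC2, hC1, hC0, sum_range_succ', sum_range_succ' _ (n + 2),
    qBinom_zero_right hq, qBinom_zero_right hq]
  simp only [hPascal, sum_add_distrib, sum_sub_distrib, ← mul_sum]
  ring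

lemma qHermite_two_mul_cos (hq : -1 < q) {σ : ℝ} (hσ : σ ^ 2 * (1 - q) = 1) (θ : ℝ)
    (n : ℕ) :
    qHermite q n (2 * σ * cos θ) = σ ^ n * hermiteCosSum q θ n := by
  induction n using Nat.twoStepInduction with
  | zero => simp [qHermite, hermiteCosSum, qBinom_zero_right hq]
  | one =>
    simp only [qHermite, hermiteCosSum, sum_range_succ, Nat.cast_one,
      Nat.cast_zero, qBinom_zero_right hq, qBinom_self hq, mul_zero, sub_zero, one_mul, pow_one]
    rw [show (1 - 2 * 1 : ℝ) * θ = -θ by ring, cos_neg]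
    ring
  | more n ih ih' =>
    have hNat : qNat q (n + 1) = σ ^ 2 * (1 - q ^ (n + 1)) := by
      rw [← one_sub_mul_qNat, ← mul_assoc, hσ, one_mul]
    rw [qHermite, ih, ih', hermiteCosSum_add_two hq, hNat]
    ring

end CosineRepresentation

section Summability

open Real

variable {q : ℝ}

lemma abs_hermiteCosSum_le {B : ℝ} (hB : ∀ n k, |qBinom q n k| ≤ B) (θ : ℝ) (n : ℕ) :
    |hermiteCosSum q θ n| ≤ (n + 1) * B := calc
  |hermiteCosSum q θ n| ≤ ∑ k ∈ range (n + 1), B := by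
      refine (abs_sum_le_sum_abs _ _).trans (sum_le_sum fun k _ => ?_)
      rw [abs_mul]
      exact (mul_le_of_le_one_right (abs_nonneg _) (abs_cos_le_one _)).trans (hB n k)
  _ = (n + 1) * B := by simp

lemma exists_abs_qHermite_le (hq : |q| < 1) :
    ∃ B, ∀ x ∈ Sq q, ∀ n : ℕ,
      |qHermite q n x| ≤ B * (n + 1) * (√(1 - q))⁻¹ ^ n := by
  obtain ⟨B, hB⟩ := exists_abs_qBinom_le hq
  have h1q : 0 < 1 - q := by linarith [(abs_lt.1 hq).2]
  have hs : 0 < √(1 - q) := sqrt_pos.2 h1q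
  refine ⟨B, fun x hx n => ?_⟩
  set c := x * √(1 - q) / 2
  have hc : c ∈ Set.Icc (-1 : ℝ) 1 := by
    obtain ⟨hx1, hx2⟩ := hx
    rw [le_div_iff₀ hs] at hx2
    rw [← neg_div, div_le_iff₀ hs] at hx1
    constructor <;> simp only [c] <;> linarith
  have hxc : x = 2 * (√(1 - q))⁻¹ * cos (arccos c) := by
    rw [cos_arccos hc.1 hc.2]
    simp only [c]
    field_simp
  have hσ : (√(1 - q))⁻¹ ^ 2 * (1 - q) = 1 := by
    rw [inv_pow, sq_sqrt h1q.le, inv_mul_cancel₀ h1q.ne']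
  rw [hxc, qHermite_two_mul_cos (abs_lt.1 hq).1 hσ, abs_mul, abs_pow, abs_of_pos (inv_pos.2 hs)]
  calc (√(1 - q))⁻¹ ^ n * |hermiteCosSum q (arccos c) n|
      ≤ (√(1 - q))⁻¹ ^ n * ((n + 1) * B) := by gcongr; exact abs_hermiteCosSum_le hB _ n
    _ = B * (n + 1) * (√(1 - q))⁻¹ ^ n := by ring

lemma summable_add_mul_add_mul_geometric {r : ℝ} (hr : |r| < 1) (a b : ℝ) :
    Summable fun n : ℕ => ((n : ℝ) + a) * ((n : ℝ) + b) * r ^ n := by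
  have h (k : ℕ) := summable_pow_mul_geometric_of_norm_lt_one k (r := r) hr
  refine (((h 2).add ((h 1).mul_left (a + b))).add ((h 0).mul_left (a * b))).congr fun n => ?_
  ring

lemma summable_gammaPM_term {ρ x y : ℝ} (hq : |q| < 1) (hρ : |ρ| < 1) (hx : x ∈ Sq q)
    (hy : y ∈ Sq q) (i j : ℕ) :
    Summable fun n : ℕ => ρ ^ n / qFact q n * qHermite q (n + i) x * qHermite q (n + j) y := by
  obtain ⟨B, hB⟩ := exists_abs_qHermite_le hq
  set σ := (√(1 - q))⁻¹
  set L := exp (-(|q| / ((1 - |q|) * (1 - |q|))))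
  have h1q : 0 < 1 - q := by linarith [(abs_lt.1 hq).2]
  have hσ : 0 < σ := inv_pos.2 (sqrt_pos.2 h1q)
  have hσ2 : σ ^ 2 * (1 - q) = 1 := by
    rw [inv_pow, sq_sqrt h1q.le, inv_mul_cancel₀ h1q.ne']
  have hB0 : 0 ≤ B := (abs_nonneg _).trans ((hB x hx 0).trans_eq (by simp))
  have hfact (n : ℕ) : L * (σ ^ 2) ^ n ≤ qFact q n := by
    have : qFact q n = qPoch q q n * (σ ^ 2) ^ n := by
      rw [← one_sub_pow_mul_qFact, mul_comm, ← mul_assoc, ← mul_pow, hσ2, one_pow, one_mul]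
    rw [this]
    gcongr
    exact exp_neg_le_qPoch hq hq n
  refine Summable.of_norm_bounded
    ((summable_add_mul_add_mul_geometric (r := |ρ|) (by rwa [abs_abs]) (i + 1) (j + 1)).mul_left
      (B ^ 2 * σ ^ (i + j) / L)) fun n => ?_
  have hHx := hB x hx (n + i)
  have hHy := hB y hy (n + j)
  push_cast at hHx hHy
  rw [Real.norm_eq_abs, abs_mul, abs_mul, abs_div, abs_pow,
    abs_of_pos (qFact_pos (abs_lt.1 hq).1 n)]
  calc |ρ| ^ n / qFact q n * |qHermite q (n + i) x| * |qHermite q (n + j) y|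
      ≤ |ρ| ^ n / (L * (σ ^ 2) ^ n) * (B * (n + i + 1) * σ ^ (n + i)) *
          (B * (n + j + 1) * σ ^ (n + j)) := by
        gcongr
        exact hfact n
    _ = B ^ 2 * σ ^ (i + j) / L * ((n + (i + 1)) * (n + (j + 1)) * |ρ| ^ n) := by
        field_simp
        ring

end Summability

section GammaRecurrence

variable {q ρ x y : ℝ}

/-- At `j = 0` the truncated index `j - 1 = 0` is harmless: its coefficient is `[0]_q = 0`. -/
def GammaRecurrence (q ρ y : ℝ) (F : ℕ → ℕ → ℝ) : Prop :=
  ∀ i j, F i (j + 1) = y * F i j - qNat q j * F i (j - 1) - ρ * q ^ j * F (i + 1) j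

lemma GammaRecurrence.unique {F G : ℕ → ℕ → ℝ} (hF : GammaRecurrence q ρ y F)
    (hG : GammaRecurrence q ρ y G) (h0 : ∀ i, F i 0 = G i 0) : F = G := by
  suffices ∀ j i, F i j = G i j from funext₂ fun i j => this j i
  intro j
  induction j using Nat.strong_induction_on with
  | _ j ih =>
    rcases j with _ | j
    · exact h0
    · intro i
      rw [hF, hG, ih j (by omega), ih (j - 1) (by omega), ih j (by omega)]

lemma qHermite_succ (n : ℕ) (y : ℝ) :
    qHermite q (n + 1) y = y * qHermite q n y - qNat q n * qHermite q (n - 1) y := by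
  rcases n with _ | n
  · simp [qHermite, qNat_zero]
  · rfl

lemma qNat_mul_qHermite_add_sub_one (a b : ℕ) (y : ℝ) :
    qNat q a * qHermite q (a + b - 1) y = qNat q a * qHermite q (a - 1 + b) y := by
  rcases a with _ | a
  · simp [qNat_zero]
  · congr 3
    omega

lemma gammaPM_comm (q ρ : ℝ) (i j : ℕ) (x y : ℝ) :
    gammaPM q ρ i j x y = gammaPM q ρ j i y x :=
  tsum_congr fun n => by ring

lemma hasSum_qNat_mul_gammaPM_term (hq : |q| < 1) (hρ : |ρ| < 1) (hx : x ∈ Sq q)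
    (hy : y ∈ Sq q) (i j : ℕ) :
    HasSum (fun n => ρ ^ n * qNat q n / qFact q n * qHermite q (n + i) x *
      qHermite q (n - 1 + j) y) (ρ * gammaPM q ρ (i + 1) j x y) := by
  rw [← hasSum_nat_add_iff' 1]
  simp only [sum_range_one, qNat_zero, mul_zero, zero_div, zero_mul, sub_zero]
  have hshift : (fun n => ρ ^ (n + 1) * qNat q (n + 1) / qFact q (n + 1) *
      qHermite q (n + 1 + i) x * qHermite q (n + 1 - 1 + j) y) =
      fun n => ρ * (ρ ^ n / qFact q n * qHermite q (n + (i + 1)) x * qHermite q (n + j) y) := by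
    funext n
    have := (qNat_pos (abs_lt.1 hq).1 n.succ_ne_zero).ne'
    rw [qFact_succ, show n + 1 + i = n + (i + 1) by omega, Nat.add_sub_cancel, pow_succ]
    field_simp
  rw [hshift]
  exact (summable_gammaPM_term hq hρ hx hy (i + 1) j).hasSum.mul_left ρ

lemma gammaRecurrence_gammaPM (hq : |q| < 1) (hρ : |ρ| < 1) (hx : x ∈ Sq q)
    (hy : y ∈ Sq q) : GammaRecurrence q ρ y fun i j => gammaPM q ρ i j x y := by
  intro i j
  have hγ (i j : ℕ) : HasSum (fun n => ρ ^ n / qFact q n * qHermite q (n + i) x *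
      qHermite q (n + j) y) (gammaPM q ρ i j x y) :=
    (summable_gammaPM_term hq hρ hx hy i j).hasSum
  have hterm (n : ℕ) : ρ ^ n / qFact q n * qHermite q (n + i) x * qHermite q (n + (j + 1)) y =
      y * (ρ ^ n / qFact q n * qHermite q (n + i) x * qHermite q (n + j) y) -
      qNat q j * (ρ ^ n / qFact q n * qHermite q (n + i) x * qHermite q (n + (j - 1)) y) -
      q ^ j * (ρ ^ n * qNat q n / qFact q n * qHermite q (n + i) x *
        qHermite q (n - 1 + j) y) := by
    have hsplit : qNat q (n + j) * qHermite q (n + j - 1) y =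
        qNat q j * qHermite q (n + (j - 1)) y + q ^ j * (qNat q n * qHermite q (n - 1 + j) y) := by
      rw [add_comm n j, qNat_add, add_mul, mul_assoc, qNat_mul_qHermite_add_sub_one, add_comm j n,
        qNat_mul_qHermite_add_sub_one, add_comm (j - 1) n]
    rw [← add_assoc, qHermite_succ]
    linear_combination (-(ρ ^ n / qFact q n * qHermite q (n + i) x)) * hsplit
  have hsum := (((hγ i j).mul_left y).sub ((hγ i (j - 1)).mul_left (qNat q j))).sub
    ((hasSum_qNat_mul_gammaPM_term hq hρ hx hy i j).mul_left (q ^ j))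
  simp only [← hterm] at hsum
  exact hsum.tsum_eq.trans (by ring)

lemma qPoch_succ (a q : ℝ) (n : ℕ) : qPoch a q (n + 1) = qPoch a q n * (1 - a * q ^ n) :=
  prod_range_succ _ _

lemma eq_ascP_div_qPoch_mul {g : ℕ → ℝ} (hρq : ∀ i, 1 - ρ ^ 2 * q ^ i ≠ 0)
    (hg : ∀ i, (1 - ρ ^ 2 * q ^ i) * g (i + 1) =
      (x - ρ * y * q ^ i) * g i - qNat q i * g (i - 1))
    (i : ℕ) : g i = ascP q y ρ i x / qPoch (ρ ^ 2) q i * g 0 := by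
  have hPoch (n : ℕ) : qPoch (ρ ^ 2) q n ≠ 0 := prod_ne_zero_iff.2 fun j _ => hρq j
  induction i using Nat.twoStepInduction with
  | zero => simp [ascP, qPoch]
  | one =>
    have h := hg 0
    have h0 := hρq 0
    simp only [pow_zero, mul_one, qNat_zero, zero_mul, sub_zero, zero_add] at h h0
    simp only [ascP, qPoch, prod_range_one, pow_zero, mul_one]
    field_simp
    linear_combination h
  | more n ih ih' =>
    have h := hg (n + 1)
    rw [Nat.add_sub_cancel, ih, ih', qPoch_succ] at h
    have := hPoch n
    have := hρq n
    have := hρq (n + 1)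
    apply mul_left_cancel₀ (hρq (n + 1))
    rw [h, ascP, qPoch_succ, qPoch_succ]
    field_simp

lemma gammaPM_zero_right (hq : |q| < 1) (hρ : |ρ| < 1) (hx : x ∈ Sq q) (hy : y ∈ Sq q)
    (i : ℕ) :
    gammaPM q ρ i 0 x y = ascP q y ρ i x / qPoch (ρ ^ 2) q i * gammaPM q ρ 0 0 x y := by
  have hρq (i : ℕ) : 1 - ρ ^ 2 * q ^ i ≠ 0 := by
    have : |ρ ^ 2 * q ^ i| < 1 := by
      rw [abs_mul, abs_pow, abs_pow]
      exact mul_lt_one_of_nonneg_of_lt_one_left (by positivity)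
        (pow_lt_one₀ (abs_nonneg ρ) hρ two_ne_zero) (pow_le_one₀ (abs_nonneg q) hq.le)
    linarith [le_abs_self (ρ ^ 2 * q ^ i)]
  refine eq_ascP_div_qPoch_mul (g := fun i => gammaPM q ρ i 0 x y) hρq (fun i => ?_) i
  have hX := gammaRecurrence_gammaPM hq hρ hy hx 0 i
  have hY := gammaRecurrence_gammaPM hq hρ hx hy i 0
  simp only [gammaPM_comm q ρ _ _ y x, qNat_zero, zero_mul, sub_zero, pow_zero, mul_one] at hX hY
  linear_combination hX - ρ * q ^ i * hY

end GammaRecurrence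

section QpolyCoefficients

variable {q ρ y : ℝ}

def qpolyCoef (q ρ y : ℝ) (j s : ℕ) : ℝ :=
  (-1 : ℝ) ^ s * q ^ (s * (s - 1) / 2) * qBinom q j s * ρ ^ s * qHermite q (j - s) y

lemma qpolyCoef_of_lt {j s : ℕ} (h : j < s) : qpolyCoef q ρ y j s = 0 := by
  simp [qpolyCoef, qBinom_of_lt h]

lemma qpolyCoef_succ_zero (hq : -1 < q) (j : ℕ) :
    qpolyCoef q ρ y (j + 1) 0 =
      y * qpolyCoef q ρ y j 0 - qNat q j * qpolyCoef q ρ y (j - 1) 0 := by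
  simp [qpolyCoef, qBinom_zero_right hq, qHermite_succ]

lemma qpolyCoef_succ_succ (hq : -1 < q) (j s : ℕ) :
    qpolyCoef q ρ y (j + 1) (s + 1) = y * qpolyCoef q ρ y j (s + 1) -
      qNat q j * qpolyCoef q ρ y (j - 1) (s + 1) - ρ * q ^ j * qpolyCoef q ρ y j s := by
  have htri : q ^ ((s + 1) * (s + 1 - 1) / 2) = q ^ (s * (s - 1) / 2) * q ^ s := by
    rw [Nat.triangle_succ, pow_add]
  rcases lt_trichotomy s j with hs | rfl | hs
  · obtain ⟨m, rfl⟩ := Nat.exists_eq_add_of_lt hs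
    have hPascal := qBinom_succ_succ hq (s + m + 1) s
    have hAbsorb := qBinom_succ_mul_qNat hq (s + m) (s + 1)
    have hH := qHermite_succ (q := q) m y
    rw [show s + m + 1 - s = m + 1 by omega] at hPascal
    rw [show s + m + 1 - (s + 1) = m by omega] at hAbsorb
    simp only [qpolyCoef, htri, show s + m + 1 + 1 - (s + 1) = m + 1 by omega,
      show s + m + 1 - (s + 1) = m by omega, show s + m + 1 - 1 = s + m by omega,
      show s + m - (s + 1) = m - 1 by omega, show s + m + 1 - s = m + 1 by omega, hPascal]
    rw [show q ^ (s + m + 1) = q ^ s * q ^ (m + 1) by rw [← pow_add]; ring_nf]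
    linear_combination ((-1 : ℝ) ^ s * q ^ (s * (s - 1) / 2) * q ^ s * ρ ^ (s + 1)) *
      (qHermite q (m - 1) y * hAbsorb - qBinom q (s + m + 1) (s + 1) * hH)
  · simp only [qpolyCoef, htri, qBinom_self hq, qBinom_of_lt (Nat.lt_succ_self s),
      qBinom_of_lt (by omega : s - 1 < s + 1), Nat.sub_self]
    ring
  · simp only [qpolyCoef_of_lt (by omega : j + 1 < s + 1), qpolyCoef_of_lt (by omega : j < s + 1),
      qpolyCoef_of_lt (by omega : j - 1 < s + 1), qpolyCoef_of_lt hs]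
    ring

lemma sum_range_qpolyCoef_mul (f : ℕ → ℝ) {j N : ℕ} (h : j + 1 ≤ N) :
    ∑ s ∈ range N, qpolyCoef q ρ y j s * f s =
      ∑ s ∈ range (j + 1), qpolyCoef q ρ y j s * f s :=
  eventually_constant_sum (fun s hs => by rw [qpolyCoef_of_lt (by omega), zero_mul]) h

lemma gammaRecurrence_sum_qpolyCoef_mul (hq : -1 < q) (Γ : ℕ → ℝ) :
    GammaRecurrence q ρ y fun i j =>
      ∑ s ∈ range (j + 1), qpolyCoef q ρ y j s * Γ (i + s) := by
  intro i j
  have hterm (s : ℕ) : qpolyCoef q ρ y (j + 1) (s + 1) * Γ (i + (s + 1)) =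
      y * (qpolyCoef q ρ y j (s + 1) * Γ (i + (s + 1))) -
      qNat q j * (qpolyCoef q ρ y (j - 1) (s + 1) * Γ (i + (s + 1))) -
      ρ * q ^ j * (qpolyCoef q ρ y j s * Γ (i + 1 + s)) := by
    rw [qpolyCoef_succ_succ hq, show i + 1 + s = i + (s + 1) by omega]
    ring
  have hshift (m : ℕ) (hm : m ≤ j) :
      ∑ s ∈ range (m + 1), qpolyCoef q ρ y m s * Γ (i + s) =
      ∑ s ∈ range (j + 1), qpolyCoef q ρ y m (s + 1) * Γ (i + (s + 1)) +
        qpolyCoef q ρ y m 0 * Γ (i + 0) := by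
    rw [← sum_range_qpolyCoef_mul _ (show m + 1 ≤ j + 2 by omega), sum_range_succ']
  dsimp only
  rw [hshift j le_rfl, hshift (j - 1) (Nat.sub_le j 1), sum_range_succ',
    sum_congr rfl fun s _ => hterm s, sum_sub_distrib, sum_sub_distrib,
    ← mul_sum, ← mul_sum, ← mul_sum, qpolyCoef_succ_zero hq]
  ring

lemma Qpoly_eq_sum_qpolyCoef_mul (q ρ : ℝ) (i j : ℕ) (x y : ℝ) :
    Qpoly q ρ i j x y = ∑ s ∈ range (j + 1),
      qpolyCoef q ρ y j s * (ascP q y ρ (i + s) x / qPoch (ρ ^ 2) q (i + s)) := by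
  simp only [Qpoly, qpolyCoef, mul_div_assoc]

lemma Qpoly_zero_right (hq : -1 < q) (i : ℕ) (x : ℝ) :
    Qpoly q ρ i 0 x y = ascP q y ρ i x / qPoch (ρ ^ 2) q i := by
  simp [Qpoly, qBinom_zero_right hq, qHermite]

end QpolyCoefficients

/-- γ_{i,j}(x,y|ρ,q) = Q_{i,j}(x,y|ρ,q) · γ_{0,0}(x,y|ρ,q). -/
theorem statement4 (q ρ x y : ℝ) (hq : |q| < 1) (hρ : |ρ| < 1)
    (hx : x ∈ Sq q) (hy : y ∈ Sq q) (i j : ℕ) :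
    gammaPM q ρ i j x y = Qpoly q ρ i j x y * gammaPM q ρ 0 0 x y := by
  have hQ : GammaRecurrence q ρ y fun i j => Qpoly q ρ i j x y * gammaPM q ρ 0 0 x y := by
    simp only [Qpoly_eq_sum_qpolyCoef_mul, sum_mul, mul_assoc]
    exact gammaRecurrence_sum_qpolyCoef_mul (abs_lt.1 hq).1
      fun m => ascP q y ρ m x / qPoch (ρ ^ 2) q m * gammaPM q ρ 0 0 x y
  have h0 (i : ℕ) : gammaPM q ρ i 0 x y = Qpoly q ρ i 0 x y * gammaPM q ρ 0 0 x y := by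
    rw [Qpoly_zero_right (abs_lt.1 hq).1, gammaPM_zero_right hq hρ hx hy]
  exact congrFun₂ ((gammaRecurrence_gammaPM hq hρ hx hy).unique hQ h0) i j
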